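/- arXiv:math/0606142 — 2 statements merged into one kernel-verified Lean document; each statement's English description precedes it below -/
import Mathlib

section
/- Let $R = k[x,y]$ be the polynomial ring in two variables over a field $k$ and let $M = H^1_{(xy)}(R) = R_{xy}/R$. Then $H^0_{(y)}(M)$, the $y$-power torsion submodule of $M$, is isomorphic to $H^1_{(y)}(R) = R_y/R$. -/
open LocalizedModule CategoryTheory

section CechPreamble
variable (R : Type*) [CommRing R] (M : Type*) [AddCommGroup M] [Module R M]

/-- Powers of `a` act invertibly on the localization at powers of `b` when `a ∣ b`. -/
theorem isUnit_end_of_dvd (a b : R) (h : a ∣ b) (s : Submonoid.powers a) :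
    IsUnit ((algebraMap R (Module.End R (LocalizedModule (Submonoid.powers b) M))) s) := by
  obtain ⟨n, hn⟩ := s.2
  obtain ⟨c, rfl⟩ := h
  have hb : IsUnit ((algebraMap R (Module.End R (LocalizedModule (Submonoid.powers (a * c)) M)))
      ((a * c) ^ n)) :=
    IsLocalizedModule.map_units (LocalizedModule.mkLinearMap (Submonoid.powers (a * c)) M)
      (⟨(a * c) ^ n, ⟨n, rfl⟩⟩ : Submonoid.powers (a * c))
  rw [Module.End.isUnit_iff] at hb ⊢
  have key : ∀ m : LocalizedModule (Submonoid.powers (a * c)) M,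
      (algebraMap R (Module.End R _)) ((a * c) ^ n) m = c ^ n • (a ^ n) • m := by
    intro m
    rw [Module.algebraMap_end_apply, show (a * c) ^ n = c ^ n * a ^ n by ring, mul_smul]
  have hs : ((algebraMap R (Module.End R (LocalizedModule (Submonoid.powers (a * c)) M))) s)
      = (algebraMap R _) (a ^ n) := by rw [← hn]
  rw [hs]
  constructor
  · intro m m' hm
    apply hb.1
    rw [key, key]
    simp only [Module.algebraMap_end_apply] at hm ⊢
    rw [hm]
  · intro z
    obtain ⟨m, hm⟩ := hb.2 z
    refine ⟨c ^ n • m, ?_⟩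
    rw [← hm, key]
    simp only [Module.algebraMap_end_apply, smul_smul, mul_comm]

/-- The canonical localization map `M_a → M_b` for `a ∣ b`. -/
noncomputable def locMapOfDvd (a b : R) (h : a ∣ b) :
    LocalizedModule (Submonoid.powers a) M →ₗ[R] LocalizedModule (Submonoid.powers b) M :=
  IsLocalizedModule.lift (Submonoid.powers a) (LocalizedModule.mkLinearMap _ M)
    (LocalizedModule.mkLinearMap _ M) (isUnit_end_of_dvd R M a b h)

theorem main_aux {R : Type*} [CommRing R] [IsDomain R] (x y : R)
    (hx : Prime x) (hxy : ¬ x ∣ y) (hy : y ≠ 0) :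
    Nonempty ((Submodule.torsion' R
        (LocalizedModule (Submonoid.powers (x * y)) R ⧸
          LinearMap.range (LocalizedModule.mkLinearMap (Submonoid.powers (x * y)) R))
        (Submonoid.powers y)) ≃ₗ[R]
      (LocalizedModule (Submonoid.powers y) R ⧸
        LinearMap.range (LocalizedModule.mkLinearMap (Submonoid.powers y) R))) := by
  have hx0 : x ≠ 0 := hx.ne_zero
  have hdvd : y ∣ x * y := Dvd.intro_left x rfl
  set S1 := Submonoid.powers y with hS1
  set S2 := Submonoid.powers (x * y) with hS2
  have hS2ne : ∀ u : S2, (u : R) ≠ 0 := by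
    rintro ⟨u, j, rfl⟩
    exact pow_ne_zero _ (mul_ne_zero hx0 hy)
  set ψ : LocalizedModule S1 R →ₗ[R] LocalizedModule S2 R := locMapOfDvd R R y (x * y) hdvd
    with hψdef
  set q := (LinearMap.range (LocalizedModule.mkLinearMap S2 R)).mkQ with hq
  set φ := q ∘ₗ ψ with hφ
  -- injectivity of y^n • on LocalizedModule S2 R
  have hinj : ∀ n : ℕ, Function.Injective
      (fun m : LocalizedModule S2 R => (y ^ n : R) • m) := by
    intro n
    have hu := isUnit_end_of_dvd R R y (x * y) hdvd ⟨y ^ n, n, rfl⟩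
    rw [Module.End.isUnit_iff] at hu
    intro m m' hm
    apply hu.injective
    simp only [Module.algebraMap_end_apply]
    simpa using hm
  have hψ1 : ∀ r : R, ψ (mk r 1) = mk r 1 := by
    intro r
    have := IsLocalizedModule.lift_comp S1 (LocalizedModule.mkLinearMap S1 R)
      (LocalizedModule.mkLinearMap S2 R) (isUnit_end_of_dvd R R y (x * y) hdvd)
    have h2 := LinearMap.congr_fun this r
    simpa [hψdef, locMapOfDvd, LocalizedModule.mkLinearMap_apply] using h2
  -- the key formula for ψ
  have hψmk : ∀ (r : R) (n : ℕ),
      ψ (mk r (⟨y ^ n, n, rfl⟩ : S1)) = mk (x ^ n * r) (⟨(x * y) ^ n, n, rfl⟩ : S2) := by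
    intro r n
    apply hinj n
    have h1 : (y ^ n : R) • (mk r (⟨y ^ n, n, rfl⟩ : S1) : LocalizedModule S1 R) = mk r 1 := by
      rw [LocalizedModule.smul'_mk, LocalizedModule.mk_eq]
      exact ⟨1, by simp [Submonoid.smul_def, smul_eq_mul, mul_comm]⟩
    show (y ^ n : R) • ψ (mk r ⟨y ^ n, n, rfl⟩) =
      (y ^ n : R) • (mk (x ^ n * r) ⟨(x * y) ^ n, n, rfl⟩ : LocalizedModule S2 R)
    rw [← map_smul, h1, hψ1, LocalizedModule.smul'_mk, LocalizedModule.mk_eq]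
    refine ⟨1, ?_⟩
    simp only [Submonoid.smul_def, smul_eq_mul, one_mul, Submonoid.coe_one]
    ring
  -- kernel computation
  have hker : LinearMap.ker φ = LinearMap.range (LocalizedModule.mkLinearMap S1 R) := by
    apply le_antisymm
    · rintro m hm
      obtain ⟨⟨r, s⟩, rfl⟩ : ∃ p : R × S1, mk p.1 p.2 = m := by
        induction m using LocalizedModule.induction_on with
        | h r s => exact ⟨(r, s), rfl⟩
      obtain ⟨n, hn⟩ := s.2
      have hs : s = ⟨y ^ n, n, rfl⟩ := Subtype.ext hn.symm
      subst hs
      rw [LinearMap.mem_ker, hφ, LinearMap.comp_apply, hψmk] at hm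
      rw [hq] at hm
      rw [Submodule.mkQ_apply, Submodule.Quotient.mk_eq_zero] at hm
      obtain ⟨t, ht⟩ := hm
      rw [LocalizedModule.mkLinearMap_apply, LocalizedModule.mk_eq] at ht
      obtain ⟨u, hu⟩ := ht
      simp only [Submonoid.smul_def, smul_eq_mul, Submonoid.coe_one, one_mul] at hu
      -- hu : u * (x*y)^n... careful with direction
      have hcancel : (x:R) ^ n * t = y ^ n * r ∨ True := Or.inr trivial
      -- derive r = y ^ n * t
      have h1 : t * ((x * y) ^ n) = x ^ n * r := by
        have := mul_left_cancel₀ (hS2ne u) hu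
        linear_combination this
      have h2 : r = y ^ n * t := by
        have h3 : x ^ n * (y ^ n * t) = x ^ n * r := by linear_combination h1
        exact (mul_left_cancel₀ (pow_ne_zero n hx0) h3).symm
      refine ⟨t, ?_⟩
      rw [LocalizedModule.mkLinearMap_apply, LocalizedModule.mk_eq]
      exact ⟨1, by simp [Submonoid.smul_def, smul_eq_mul, h2, mul_comm]⟩
    · rintro m ⟨r, rfl⟩
      rw [LinearMap.mem_ker, hφ, LinearMap.comp_apply, LocalizedModule.mkLinearMap_apply,
        hψ1, hq, Submodule.mkQ_apply, Submodule.Quotient.mk_eq_zero]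
      exact ⟨r, by rw [LocalizedModule.mkLinearMap_apply]⟩
  -- range computation
  have hrange : LinearMap.range φ = Submodule.torsion' R _ S1 := by
    apply le_antisymm
    · rintro m ⟨a, rfl⟩
      obtain ⟨⟨r, s⟩, rfl⟩ : ∃ p : R × S1, mk p.1 p.2 = a := by
        induction a using LocalizedModule.induction_on with
        | h r s => exact ⟨(r, s), rfl⟩
      obtain ⟨n, hn⟩ := s.2
      have hs : s = ⟨y ^ n, n, rfl⟩ := Subtype.ext hn.symm
      subst hs
      rw [Submodule.mem_torsion'_iff]
      refine ⟨⟨y ^ n, n, rfl⟩, ?_⟩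
      rw [hφ, LinearMap.comp_apply, hψmk, hq]
      rw [Submonoid.smul_def]
      rw [Submodule.mkQ_apply, ← Submodule.Quotient.mk_smul, Submodule.Quotient.mk_eq_zero]
      rw [LocalizedModule.smul'_mk]
      refine ⟨r, ?_⟩
      rw [LocalizedModule.mkLinearMap_apply, LocalizedModule.mk_eq]
      refine ⟨1, ?_⟩
      simp only [Submonoid.smul_def, smul_eq_mul, one_mul, Submonoid.coe_one]
      ring
    · rintro m hm
      rw [Submodule.mem_torsion'_iff] at hm
      obtain ⟨a, ha⟩ := hm
      obtain ⟨n, hn⟩ := a.2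
      obtain ⟨z, rfl⟩ := Submodule.Quotient.mk_surjective _ m
      obtain ⟨⟨r, s⟩, rfl⟩ : ∃ p : R × S2, mk p.1 p.2 = z := by
        induction z using LocalizedModule.induction_on with
        | h r s => exact ⟨(r, s), rfl⟩
      obtain ⟨j, hj⟩ := s.2
      have hs : s = ⟨(x * y) ^ j, j, rfl⟩ := Subtype.ext hj.symm
      subst hs
      have hn' : (a : R) = y ^ n := by simpa using hn.symm
      rw [Submonoid.smul_def, hn', ← Submodule.Quotient.mk_smul,
        Submodule.Quotient.mk_eq_zero, LocalizedModule.smul'_mk] at ha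
      obtain ⟨t, ht⟩ := ha
      rw [LocalizedModule.mkLinearMap_apply, LocalizedModule.mk_eq] at ht
      obtain ⟨u, hu⟩ := ht
      simp only [Submonoid.smul_def, smul_eq_mul, Submonoid.coe_one, one_mul] at hu
      have h1 : t * ((x * y) ^ j) = y ^ n * r := by
        have := mul_left_cancel₀ (hS2ne u) hu
        linear_combination this
      have hdvdr : x ^ j ∣ r := by
        have hxyn : ¬ x ∣ y ^ n := fun h => hxy (hx.dvd_of_dvd_pow h)
        refine hx.pow_dvd_of_dvd_mul_left j hxyn ?_
        exact ⟨y ^ j * t, by linear_combination -h1⟩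
      obtain ⟨w, hw⟩ := hdvdr
      refine ⟨mk w ⟨y ^ j, j, rfl⟩, ?_⟩
      rw [hφ, LinearMap.comp_apply, hψmk, hq, Submodule.mkQ_apply]
      congr 1
      rw [hw]
  exact ⟨(LinearEquiv.ofEq _ _ hrange.symm).trans
    ((LinearMap.quotKerEquivRange φ).symm.trans (Submodule.quotEquivOfEq _ _ hker))⟩

/-- over `R = k[x,y]`, for `M = H¹_{(xy)}(R) = R_{xy}/R`, the `y`-power torsion
submodule of `M` is isomorphic to `H¹_{(y)}(R) = R_y/R`. -/
theorem torsion_of_H1_xy (k : Type*) [Field k] :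
    letI R := MvPolynomial (Fin 2) k
    letI x : R := MvPolynomial.X 0
    letI y : R := MvPolynomial.X 1
    letI M := LocalizedModule (Submonoid.powers (x * y)) R ⧸
      LinearMap.range (LocalizedModule.mkLinearMap (Submonoid.powers (x * y)) R)
    Nonempty ((Submodule.torsion' R M (Submonoid.powers y)) ≃ₗ[R]
      (LocalizedModule (Submonoid.powers y) R ⧸
        LinearMap.range (LocalizedModule.mkLinearMap (Submonoid.powers y) R))) := by
  have hx : Prime (MvPolynomial.X 0 : MvPolynomial (Fin 2) k) := by
    rw [← MulEquiv.prime_iff (MvPolynomial.finSuccEquiv k 1).toMulEquiv]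
    show Prime ((MvPolynomial.finSuccEquiv k 1) (MvPolynomial.X 0))
    rw [MvPolynomial.finSuccEquiv_X_zero]
    exact Polynomial.prime_X
  have hxy : ¬ (MvPolynomial.X 0 : MvPolynomial (Fin 2) k) ∣ MvPolynomial.X 1 := by
    rw [MvPolynomial.X_dvd_X]; decide
  exact main_aux _ _ hx hxy (MvPolynomial.X_ne_zero 1)

end CechPreamble
end

section
/- Let $R = k[x_1,\dots,x_6]$ be the polynomial ring over a field $k$ of characteristic zero, and let $I \subseteq R$ be the ideal generated by the three $2\times 2$ minors $f_1 = x_1x_5 - x_2x_4$, $f_2 = x_1x_6 - x_3x_4$, $f_3 = x_2x_6 - x_3x_5$ of the generic $2\times 3$ matrix. Then the local cohomology module $H^3_I(R)$ is nonzero. -/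
open LocalizedModule CategoryTheory

section CechPreamble
variable (R : Type*) [CommRing R] (M : Type*) [AddCommGroup M] [Module R M]

namespace H3Aux
open MvPolynomial

noncomputable section
variable {k : Type*} [Field k] [CharZero k]

abbrev Poly (k : Type*) [Field k] := MvPolynomial (Fin 6) k



def g1 (k : Type*) [Field k] : Poly k := X 0 * X 4 - X 1 * X 3
def g2 (k : Type*) [Field k] : Poly k := X 0 * X 5 - X 2 * X 3
def g3 (k : Type*) [Field k] : Poly k := X 1 * X 5 - X 2 * X 4

def wt (m : Fin 6 →₀ ℕ) : ℕ := ∏ j, (m j).factorial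

lemma wt_pos (m : Fin 6 →₀ ℕ) : 0 < wt m :=
  Finset.prod_pos fun j _ => Nat.factorial_pos _

lemma wt_add_single (i : Fin 6) (m : Fin 6 →₀ ℕ) :
    wt (Finsupp.single i 1 + m) = (m i + 1) * wt m := by
  unfold wt
  rw [Fintype.prod_eq_mul_prod_compl i, Fintype.prod_eq_mul_prod_compl i]
  have h1 : (Finsupp.single i 1 + m : Fin 6 →₀ ℕ) i = m i + 1 := by simp [Nat.add_comm]
  rw [h1, Nat.factorial_succ, mul_assoc]
  congr 1
  congr 1
  refine Finset.prod_congr rfl fun j hj => ?_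
  have hji : j ≠ i := by simpa using hj
  rw [Finsupp.add_apply, Finsupp.single_apply, if_neg (fun h => hji h.symm), zero_add]

def pair (P Q : Poly k) : k := ∑ m ∈ P.support, coeff m P * coeff m Q * (wt m : k)

lemma pair_eq_sum (P Q : Poly k) (S : Finset (Fin 6 →₀ ℕ)) (hS : P.support ⊆ S) :
    pair P Q = ∑ m ∈ S, coeff m P * coeff m Q * (wt m : k) :=
  Finset.sum_subset hS (fun m _ hm => by
    rw [MvPolynomial.notMem_support_iff.mp hm, zero_mul, zero_mul])

lemma pair_add_left (P P' Q : Poly k) : pair (P + P') Q = pair P Q + pair P' Q := by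
  rw [pair_eq_sum (P + P') Q (P.support ∪ P'.support) (MvPolynomial.support_add),
      pair_eq_sum P Q (P.support ∪ P'.support) Finset.subset_union_left,
      pair_eq_sum P' Q (P.support ∪ P'.support) Finset.subset_union_right,
      ← Finset.sum_add_distrib]
  exact Finset.sum_congr rfl fun m _ => by rw [coeff_add]; ring

lemma pair_neg_left (P Q : Poly k) : pair (-P) Q = -pair P Q := by
  unfold pair
  rw [MvPolynomial.support_neg, ← Finset.sum_neg_distrib]
  exact Finset.sum_congr rfl fun m _ => by rw [coeff_neg]; ring

lemma pair_sub_left (P P' Q : Poly k) : pair (P - P') Q = pair P Q - pair P' Q := by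
  rw [sub_eq_add_neg, pair_add_left, pair_neg_left, sub_eq_add_neg]

lemma pair_zero_right (P : Poly k) : pair P 0 = 0 := by
  unfold pair; simp

lemma pair_sub_right (P Q Q' : Poly k) : pair P (Q - Q') = pair P Q - pair P Q' := by
  unfold pair
  rw [← Finset.sum_sub_distrib]
  exact Finset.sum_congr rfl fun m _ => by rw [coeff_sub]; ring

lemma pair_monomial (m : Fin 6 →₀ ℕ) (c : k) (Q : Poly k) :
    pair (monomial m c) Q = c * coeff m Q * (wt m : k) := by
  rw [pair_eq_sum _ Q {m} support_monomial_subset, Finset.sum_singleton, coeff_monomial,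
    if_pos rfl]

lemma pair_one (Q : Poly k) : pair 1 Q = coeff 0 Q := by
  rw [show (1 : Poly k) = monomial 0 1 by simp, pair_monomial]
  simp [wt]

lemma coeff_pderiv_mul_wt (i : Fin 6) (m : Fin 6 →₀ ℕ) (Q : Poly k) :
    coeff m (pderiv i Q) * (wt m : k)
      = coeff (Finsupp.single i 1 + m) Q * (wt (Finsupp.single i 1 + m) : k) := by
  induction Q using MvPolynomial.induction_on' with
  | add p q hp hq => rw [map_add, coeff_add, coeff_add, add_mul, add_mul, hp, hq]
  | monomial u a =>
    rw [pderiv_monomial, coeff_monomial, coeff_monomial]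
    by_cases h : u = Finsupp.single i 1 + m
    · subst h
      rw [if_pos rfl, if_pos, wt_add_single]
      · have hui : (Finsupp.single i 1 + m : Fin 6 →₀ ℕ) i = m i + 1 := by
          simp [Nat.add_comm]
        rw [hui]
        push_cast
        ring
      · ext j
        rw [Finsupp.tsub_apply, Finsupp.add_apply, Finsupp.single_apply]
        by_cases hj : i = j
        · rw [if_pos hj]; omega
        · rw [if_neg hj]; omega
    · rw [if_neg h]
      by_cases h2 : u i = 0
      · simp [h2]
      · rw [if_neg, zero_mul, zero_mul]
        intro h3
        apply h
        ext j
        have := DFunLike.congr_fun h3 j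
        simp only [Finsupp.tsub_apply] at this
        rw [Finsupp.add_apply, Finsupp.single_apply]
        rw [Finsupp.single_apply] at this
        by_cases hj : i = j
        · subst hj; rw [if_pos rfl] at this ⊢; omega
        · rw [if_neg hj] at this ⊢; omega

lemma pair_X_mul (i : Fin 6) (P Q : Poly k) :
    pair (X i * P) Q = pair P (pderiv i Q) := by
  induction P using MvPolynomial.induction_on' with
  | add p q hp hq => rw [mul_add, pair_add_left, pair_add_left, hp, hq]
  | monomial u a =>
    have hX : (X i : Poly k) * monomial u a = monomial (Finsupp.single i 1 + u) a := by
      rw [X, monomial_mul, one_mul]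
    rw [hX, pair_monomial, pair_monomial, mul_assoc, mul_assoc, coeff_pderiv_mul_wt]

def D1 (k : Type*) [Field k] : Poly k → Poly k :=
  fun Q => pderiv 4 (pderiv 0 Q) - pderiv 3 (pderiv 1 Q)
def D2 (k : Type*) [Field k] : Poly k → Poly k :=
  fun Q => pderiv 5 (pderiv 0 Q) - pderiv 3 (pderiv 2 Q)
def D3 (k : Type*) [Field k] : Poly k → Poly k :=
  fun Q => pderiv 5 (pderiv 1 Q) - pderiv 4 (pderiv 2 Q)


lemma pair_g1_mul (P Q : Poly k) : pair (g1 k * P) Q = pair P (D1 k Q) := by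
  have h : g1 k * P = X 0 * (X 4 * P) - X 1 * (X 3 * P) := by rw [g1]; ring
  rw [h, pair_sub_left, pair_X_mul, pair_X_mul, pair_X_mul, pair_X_mul, ← pair_sub_right]
  rfl

lemma pair_g2_mul (P Q : Poly k) : pair (g2 k * P) Q = pair P (D2 k Q) := by
  have h : g2 k * P = X 0 * (X 5 * P) - X 2 * (X 3 * P) := by rw [g2]; ring
  rw [h, pair_sub_left, pair_X_mul, pair_X_mul, pair_X_mul, pair_X_mul, ← pair_sub_right]
  rfl

lemma pair_g3_mul (P Q : Poly k) : pair (g3 k * P) Q = pair P (D3 k Q) := by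
  have h : g3 k * P = X 1 * (X 5 * P) - X 2 * (X 4 * P) := by rw [g3]; ring
  rw [h, pair_sub_left, pair_X_mul, pair_X_mul, pair_X_mul, pair_X_mul, ← pair_sub_right]
  rfl

def Γ1 (P Q : Poly k) : Poly k :=
  pderiv 0 P * pderiv 4 Q + pderiv 4 P * pderiv 0 Q
    - pderiv 1 P * pderiv 3 Q - pderiv 3 P * pderiv 1 Q
def Γ2 (P Q : Poly k) : Poly k :=
  pderiv 0 P * pderiv 5 Q + pderiv 5 P * pderiv 0 Q
    - pderiv 2 P * pderiv 3 Q - pderiv 3 P * pderiv 2 Q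
def Γ3 (P Q : Poly k) : Poly k :=
  pderiv 1 P * pderiv 5 Q + pderiv 5 P * pderiv 1 Q
    - pderiv 2 P * pderiv 4 Q - pderiv 4 P * pderiv 2 Q

lemma D1_mul (P Q : Poly k) : D1 k (P * Q) = D1 k P * Q + P * D1 k Q + Γ1 P Q := by
  simp only [D1, Γ1, pderiv_mul, map_add]; ring
lemma D2_mul (P Q : Poly k) : D2 k (P * Q) = D2 k P * Q + P * D2 k Q + Γ2 P Q := by
  simp only [D2, Γ2, pderiv_mul, map_add]; ring
lemma D3_mul (P Q : Poly k) : D3 k (P * Q) = D3 k P * Q + P * D3 k Q + Γ3 P Q := by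
  simp only [D3, Γ3, pderiv_mul, map_add]; ring

lemma Γ1_mul (P Q R : Poly k) : Γ1 P (Q * R) = Γ1 P Q * R + Q * Γ1 P R := by
  simp only [Γ1, pderiv_mul]; ring
lemma Γ2_mul (P Q R : Poly k) : Γ2 P (Q * R) = Γ2 P Q * R + Q * Γ2 P R := by
  simp only [Γ2, pderiv_mul]; ring
lemma Γ3_mul (P Q R : Poly k) : Γ3 P (Q * R) = Γ3 P Q * R + Q * Γ3 P R := by
  simp only [Γ3, pderiv_mul]; ring

lemma D1_cast_mul (n : ℕ) (P : Poly k) : D1 k ((n : Poly k) * P) = (n : Poly k) * D1 k P := by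
  have hC : ((n : ℕ) : Poly k) = C ((n : ℕ) : k) := by rw [map_natCast C]
  simp only [D1, hC, pderiv_C_mul]; ring
lemma D2_cast_mul (n : ℕ) (P : Poly k) : D2 k ((n : Poly k) * P) = (n : Poly k) * D2 k P := by
  have hC : ((n : ℕ) : Poly k) = C ((n : ℕ) : k) := by rw [map_natCast C]
  simp only [D2, hC, pderiv_C_mul]; ring
lemma D3_cast_mul (n : ℕ) (P : Poly k) : D3 k ((n : Poly k) * P) = (n : Poly k) * D3 k P := by
  have hC : ((n : ℕ) : Poly k) = C ((n : ℕ) : k) := by rw [map_natCast C]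
  simp only [D3, hC, pderiv_C_mul]; ring


-- concrete values
lemma D1_g1 : D1 k (g1 k) = 2 := by simp [D1, g1, pderiv_mul, pderiv_X]; norm_num
lemma D1_g2 : D1 k (g2 k) = 0 := by simp [D1, g2, pderiv_mul, pderiv_X]
lemma D1_g3 : D1 k (g3 k) = 0 := by simp [D1, g3, pderiv_mul, pderiv_X]
lemma D2_g2 : D2 k (g2 k) = 2 := by simp [D2, g2, pderiv_mul, pderiv_X]; norm_num
lemma D2_g1 : D2 k (g1 k) = 0 := by simp [D2, g1, pderiv_mul, pderiv_X]
lemma D2_g3 : D2 k (g3 k) = 0 := by simp [D2, g3, pderiv_mul, pderiv_X]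
lemma D3_g3 : D3 k (g3 k) = 2 := by simp [D3, g3, pderiv_mul, pderiv_X]; norm_num
lemma D3_g1 : D3 k (g1 k) = 0 := by simp [D3, g1, pderiv_mul, pderiv_X]
lemma D3_g2 : D3 k (g2 k) = 0 := by simp [D3, g2, pderiv_mul, pderiv_X]

lemma Γ1_g1_g1 : Γ1 (g1 k) (g1 k) = 2 * g1 k := by
  simp [Γ1, g1, pderiv_mul, pderiv_X]; ring
lemma Γ1_g1_g2 : Γ1 (g1 k) (g2 k) = g2 k := by
  simp [Γ1, g1, g2, pderiv_mul, pderiv_X]; ring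
lemma Γ1_g1_g3 : Γ1 (g1 k) (g3 k) = g3 k := by
  simp [Γ1, g1, g3, pderiv_mul, pderiv_X]; ring
lemma Γ1_g2_g2 : Γ1 (g2 k) (g2 k) = 0 := by
  simp [Γ1, g2, pderiv_mul, pderiv_X]
lemma Γ1_g2_g3 : Γ1 (g2 k) (g3 k) = 0 := by
  simp [Γ1, g2, g3, pderiv_mul, pderiv_X]; ring
lemma Γ1_g3_g3 : Γ1 (g3 k) (g3 k) = 0 := by
  simp [Γ1, g3, pderiv_mul, pderiv_X]

lemma Γ2_g2_g2 : Γ2 (g2 k) (g2 k) = 2 * g2 k := by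
  simp [Γ2, g2, pderiv_mul, pderiv_X]; ring
lemma Γ2_g2_g1 : Γ2 (g2 k) (g1 k) = g1 k := by
  simp [Γ2, g1, g2, pderiv_mul, pderiv_X]; ring
lemma Γ2_g2_g3 : Γ2 (g2 k) (g3 k) = g3 k := by
  simp [Γ2, g2, g3, pderiv_mul, pderiv_X]; ring
lemma Γ2_g1_g1 : Γ2 (g1 k) (g1 k) = 0 := by
  simp [Γ2, g1, pderiv_mul, pderiv_X]
lemma Γ2_g1_g3 : Γ2 (g1 k) (g3 k) = 0 := by
  simp [Γ2, g1, g3, pderiv_mul, pderiv_X]; ring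
lemma Γ2_g3_g3 : Γ2 (g3 k) (g3 k) = 0 := by
  simp [Γ2, g3, pderiv_mul, pderiv_X]

lemma Γ3_g3_g3 : Γ3 (g3 k) (g3 k) = 2 * g3 k := by
  simp [Γ3, g3, pderiv_mul, pderiv_X]; ring
lemma Γ3_g3_g1 : Γ3 (g3 k) (g1 k) = g1 k := by
  simp [Γ3, g1, g3, pderiv_mul, pderiv_X]; ring
lemma Γ3_g3_g2 : Γ3 (g3 k) (g2 k) = g2 k := by
  simp [Γ3, g2, g3, pderiv_mul, pderiv_X]; ring
lemma Γ3_g1_g1 : Γ3 (g1 k) (g1 k) = 0 := by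
  simp [Γ3, g1, pderiv_mul, pderiv_X]
lemma Γ3_g1_g2 : Γ3 (g1 k) (g2 k) = 0 := by
  simp [Γ3, g1, g2, pderiv_mul, pderiv_X]; ring
lemma Γ3_g2_g2 : Γ3 (g2 k) (g2 k) = 0 := by
  simp [Γ3, g2, pderiv_mul, pderiv_X]



lemma master (D : Poly k → Poly k) (Γ : Poly k → Poly k → Poly k) (a b c : Poly k)
    (hD : ∀ P Q, D (P * Q) = D P * Q + P * D Q + Γ P Q)
    (hDcast : ∀ (n : ℕ) (P : Poly k), D ((n : Poly k) * P) = (n : Poly k) * D P)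
    (hΓ : ∀ P Q R, Γ P (Q * R) = Γ P Q * R + Q * Γ P R)
    (hDa : D a = 2) (hDb : D b = 0) (hDc : D c = 0)
    (haa : Γ a a = 2 * a) (hab : Γ a b = b) (hac : Γ a c = c)
    (hbb : Γ b b = 0) (hbc : Γ b c = 0) (hcc : Γ c c = 0) :
    (∀ A B C : ℕ, D^[A + 1] (a ^ A * (b ^ B * c ^ C)) = 0) ∧
    (∀ A B C : ℕ, ∃ K : ℕ, 0 < K ∧
      D^[A] (a ^ A * (b ^ B * c ^ C)) = (K : Poly k) * (b ^ B * c ^ C)) := by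
  -- Γ _ 1 = 0
  have hΓ1 : ∀ P, Γ P 1 = 0 := by
    intro P
    have h := hΓ P 1 1
    rw [mul_one, mul_one, one_mul] at h
    have h2 : Γ P 1 + 0 = Γ P 1 + Γ P 1 := by rw [add_zero]; exact h
    exact (add_left_cancel h2).symm
  -- D 1 = 0
  have hD1 : D 1 = 0 := by
    have h := hD 1 1
    simp only [mul_one, one_mul, hΓ1, add_zero] at h
    have h2 : D 1 + 0 = D 1 + D 1 := by rw [add_zero]; exact h
    exact (add_left_cancel h2).symm
  -- powers of c
  have hΓcc : ∀ n, Γ c (c ^ n) = 0 := by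
    intro n; induction n with
    | zero => rw [pow_zero]; exact hΓ1 c
    | succ n ih => rw [pow_succ, hΓ, ih, hcc, zero_mul, mul_zero, add_zero]
  have hDcpow : ∀ n, D (c ^ n) = 0 := by
    intro n; induction n with
    | zero => rw [pow_zero]; exact hD1
    | succ n ih => rw [pow_succ', hD, ih, hDc, hΓcc, zero_mul, mul_zero, add_zero, add_zero]
  have hΓbc : ∀ n, Γ b (c ^ n) = 0 := by
    intro n; induction n with
    | zero => exact hΓ1 b
    | succ n ih => rw [pow_succ, hΓ, ih, hbc, zero_mul, mul_zero, add_zero]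
  have hΓbb : ∀ n, Γ b (b ^ n) = 0 := by
    intro n; induction n with
    | zero => exact hΓ1 b
    | succ n ih => rw [pow_succ, hΓ, ih, hbb, zero_mul, mul_zero, add_zero]
  have hΓbM : ∀ B C, Γ b (b ^ B * c ^ C) = 0 := by
    intro B C; rw [hΓ, hΓbb, hΓbc, zero_mul, mul_zero, add_zero]
  have hDbc : ∀ B C, D (b ^ B * c ^ C) = 0 := by
    intro B C
    induction B with
    | zero => rw [pow_zero, one_mul]; exact hDcpow C
    | succ B ih =>
      rw [show b ^ (B + 1) * c ^ C = b * (b ^ B * c ^ C) by ring, hD, ih, hDb,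
        hΓ, hΓbb, hΓbc, zero_mul, mul_zero, add_zero, zero_mul, mul_zero, add_zero, add_zero]
  -- Γ a on powers
  have hΓab : ∀ n : ℕ, Γ a (b ^ n) = (n : Poly k) * b ^ n := by
    intro n; induction n with
    | zero => rw [pow_zero, hΓ1]; push_cast; ring
    | succ n ih => rw [pow_succ, hΓ, ih, hab]; push_cast; ring
  have hΓac : ∀ n : ℕ, Γ a (c ^ n) = (n : Poly k) * c ^ n := by
    intro n; induction n with
    | zero => rw [pow_zero, hΓ1]; push_cast; ring
    | succ n ih => rw [pow_succ, hΓ, ih, hac]; push_cast; ring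
  have hΓaa : ∀ n : ℕ, Γ a (a ^ n) = ((2 * n : ℕ) : Poly k) * a ^ n := by
    intro n; induction n with
    | zero => rw [pow_zero, hΓ1]; push_cast; ring
    | succ n ih => rw [pow_succ, hΓ, ih, haa]; push_cast; ring
  have hΓaM : ∀ A B C, Γ a (a ^ A * (b ^ B * c ^ C))
      = ((2 * A + B + C : ℕ) : Poly k) * (a ^ A * (b ^ B * c ^ C)) := by
    intro A B C
    rw [hΓ, hΓaa, hΓ, hΓab, hΓac]; push_cast; ring
  -- the step formula
  have step : ∀ A B C : ℕ, D (a ^ (A + 1) * (b ^ B * c ^ C))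
      = (((A + 1) * (A + B + C + 2) : ℕ) : Poly k) * (a ^ A * (b ^ B * c ^ C)) := by
    intro A B C
    induction A with
    | zero =>
      rw [pow_one, hD, hDa, hDbc, hΓ, hΓab, hΓac]
      push_cast; ring
    | succ A ih =>
      rw [show a ^ (A + 2) * (b ^ B * c ^ C) = a * (a ^ (A + 1) * (b ^ B * c ^ C)) by ring,
        hD, ih, hDa, hΓaM]
      push_cast; ring
  have iterC : ∀ (j n : ℕ) (P : Poly k), D^[j] ((n : Poly k) * P) = (n : Poly k) * D^[j] P := by
    intro j
    induction j with
    | zero => intro n P; simp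
    | succ j ih =>
      intro n P
      rw [Function.iterate_succ_apply, hDcast, ih, Function.iterate_succ_apply]
  constructor
  · intro A B C
    induction A with
    | zero =>
      rw [Function.iterate_one, show a ^ 0 * (b ^ B * c ^ C) = b ^ B * c ^ C by ring]
      exact hDbc B C
    | succ A ih =>
      rw [Function.iterate_succ_apply, step, iterC, ih, mul_zero]
  · intro A B C
    induction A with
    | zero =>
      refine ⟨1, one_pos, ?_⟩
      rw [Function.iterate_zero_apply, pow_zero, one_mul, Nat.cast_one, one_mul]
    | succ A ih =>
      obtain ⟨K, hK, hKe⟩ := ih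
      refine ⟨(A + 1) * (A + B + C + 2) * K, by positivity, ?_⟩
      rw [Function.iterate_succ_apply, step, iterC, hKe]
      push_cast; ring

lemma iterate_cast_mul (D : Poly k → Poly k)
    (hDcast : ∀ (m : ℕ) (P : Poly k), D ((m : Poly k) * P) = (m : Poly k) * D P)
    (j m : ℕ) (P : Poly k) : D^[j] ((m : Poly k) * P) = (m : Poly k) * D^[j] P := by
  induction j generalizing P with
  | zero => simp
  | succ j ih => rw [Function.iterate_succ_apply, hDcast, ih, Function.iterate_succ_apply]

lemma pair_g1_pow_mul (n : ℕ) (P Q : Poly k) :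
    pair (g1 k ^ n * P) Q = pair P ((D1 k)^[n] Q) := by
  induction n generalizing Q with
  | zero => rw [pow_zero, one_mul, Function.iterate_zero_apply]
  | succ n ih =>
    rw [show g1 k ^ (n + 1) * P = g1 k * (g1 k ^ n * P) by ring, pair_g1_mul, ih,
      ← Function.iterate_succ_apply]

lemma pair_g2_pow_mul (n : ℕ) (P Q : Poly k) :
    pair (g2 k ^ n * P) Q = pair P ((D2 k)^[n] Q) := by
  induction n generalizing Q with
  | zero => rw [pow_zero, one_mul, Function.iterate_zero_apply]
  | succ n ih =>
    rw [show g2 k ^ (n + 1) * P = g2 k * (g2 k ^ n * P) by ring, pair_g2_mul, ih,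
      ← Function.iterate_succ_apply]

lemma pair_g3_pow_mul (n : ℕ) (P Q : Poly k) :
    pair (g3 k ^ n * P) Q = pair P ((D3 k)^[n] Q) := by
  induction n generalizing Q with
  | zero => rw [pow_zero, one_mul, Function.iterate_zero_apply]
  | succ n ih =>
    rw [show g3 k ^ (n + 1) * P = g3 k * (g3 k ^ n * P) by ring, pair_g3_mul, ih,
      ← Function.iterate_succ_apply]

lemma pair_g3_pow (n : ℕ) (Q : Poly k) :
    pair (g3 k ^ n) Q = pair 1 ((D3 k)^[n] Q) := by
  rw [← pair_g3_pow_mul n 1 Q, mul_one]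

theorem not_rep (n : ℕ) (PA PB PC : Poly k) :
    (g1 k * g2 k * g3 k) ^ n
      ≠ g1 k ^ (n + 1) * PA + g2 k ^ (n + 1) * PB + g3 k ^ (n + 1) * PC := by
  intro h
  have m1 := master (D1 k) Γ1 (g1 k) (g2 k) (g3 k) D1_mul D1_cast_mul Γ1_mul
    D1_g1 D1_g2 D1_g3 Γ1_g1_g1 Γ1_g1_g2 Γ1_g1_g3 Γ1_g2_g2 Γ1_g2_g3 Γ1_g3_g3
  have m2 := master (D2 k) Γ2 (g2 k) (g1 k) (g3 k) D2_mul D2_cast_mul Γ2_mul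
    D2_g2 D2_g1 D2_g3 Γ2_g2_g2 Γ2_g2_g1 Γ2_g2_g3 Γ2_g1_g1 Γ2_g1_g3 Γ2_g3_g3
  have m3 := master (D3 k) Γ3 (g3 k) (g1 k) (g2 k) D3_mul D3_cast_mul Γ3_mul
    D3_g3 D3_g1 D3_g2 Γ3_g3_g3 Γ3_g3_g1 Γ3_g3_g2 Γ3_g1_g1 Γ3_g1_g2 Γ3_g2_g2
  obtain ⟨K1, hK1, hK1e⟩ := m1.2 n n n
  obtain ⟨K2, hK2, hK2e⟩ := m2.2 n 0 n
  obtain ⟨K3, hK3, hK3e⟩ := m3.2 n 0 0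
  have hpp : pair ((g1 k * g2 k * g3 k) ^ n) ((g1 k * g2 k * g3 k) ^ n)
      = ((K1 * K2 * K3 : ℕ) : k) := by
    rw [show ((g1 k * g2 k * g3 k) ^ n : Poly k) = g1 k ^ n * (g2 k ^ n * g3 k ^ n) by ring,
      pair_g1_pow_mul, hK1e, pair_g2_pow_mul, iterate_cast_mul (D2 k) D2_cast_mul,
      show (g2 k ^ n * g3 k ^ n : Poly k) = g2 k ^ n * (g1 k ^ 0 * g3 k ^ n) by ring,
      hK2e,
      show ((K1 : Poly k) * ((K2 : Poly k) * (g1 k ^ 0 * g3 k ^ n)))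
        = ((K1 * K2 : ℕ) : Poly k) * g3 k ^ n by push_cast; ring,
      pair_g3_pow, iterate_cast_mul (D3 k) D3_cast_mul,
      show (g3 k ^ n : Poly k) = g3 k ^ n * (g1 k ^ 0 * g2 k ^ 0) by ring,
      hK3e,
      show (((K1 * K2 : ℕ) : Poly k) * ((K3 : Poly k) * (g1 k ^ 0 * g2 k ^ 0)))
        = ((K1 * K2 * K3 : ℕ) : Poly k) by push_cast; ring,
      pair_one,
      show ((K1 * K2 * K3 : ℕ) : Poly k) = C ((K1 * K2 * K3 : ℕ) : k) from map_natCast C _,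
      coeff_zero_C]
  have hz : pair (g1 k ^ (n + 1) * PA + g2 k ^ (n + 1) * PB + g3 k ^ (n + 1) * PC)
      ((g1 k * g2 k * g3 k) ^ n) = 0 := by
    have v1 : (D1 k)^[n + 1] ((g1 k * g2 k * g3 k) ^ n) = 0 := by
      rw [show ((g1 k * g2 k * g3 k) ^ n : Poly k) = g1 k ^ n * (g2 k ^ n * g3 k ^ n) by ring]
      exact m1.1 n n n
    have v2 : (D2 k)^[n + 1] ((g1 k * g2 k * g3 k) ^ n) = 0 := by
      rw [show ((g1 k * g2 k * g3 k) ^ n : Poly k) = g2 k ^ n * (g1 k ^ n * g3 k ^ n) by ring]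
      exact m2.1 n n n
    have v3 : (D3 k)^[n + 1] ((g1 k * g2 k * g3 k) ^ n) = 0 := by
      rw [show ((g1 k * g2 k * g3 k) ^ n : Poly k) = g3 k ^ n * (g1 k ^ n * g2 k ^ n) by ring]
      exact m3.1 n n n
    rw [pair_add_left, pair_add_left, pair_g1_pow_mul, pair_g2_pow_mul, pair_g3_pow_mul,
      v1, v2, v3, pair_zero_right, pair_zero_right, pair_zero_right, add_zero, add_zero]
  rw [← h] at hz
  rw [hz] at hpp
  exact Nat.cast_ne_zero.mpr (by positivity) hpp.symm

lemma g1_ne : (g1 k) ≠ 0 := by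
  intro hcon
  have h2 := congrArg (eval (fun j : Fin 6 => if j = 0 ∨ j = 4 then (1 : k) else 0)) hcon
  simp [g1] at h2

lemma g2_ne : (g2 k) ≠ 0 := by
  intro hcon
  have h2 := congrArg (eval (fun j : Fin 6 => if j = 0 ∨ j = 5 then (1 : k) else 0)) hcon
  simp [g2] at h2

lemma g3_ne : (g3 k) ≠ 0 := by
  intro hcon
  have h2 := congrArg (eval (fun j : Fin 6 => if j = 1 ∨ j = 5 then (1 : k) else 0)) hcon
  simp [g3] at h2

end
section LocHelp
variable {R : Type*} [CommRing R]

variable {R : Type*} [CommRing R]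

lemma loc_rep (s : R) (x : LocalizedModule (Submonoid.powers s) R) :
    ∃ (n : ℕ) (a : R), x = LocalizedModule.mk a ⟨s ^ n, (Submonoid.mem_powers_iff _ _).mpr ⟨n, rfl⟩⟩ := by
  induction x using LocalizedModule.induction_on with
  | h m t =>
    obtain ⟨n, hn⟩ := t.2
    exact ⟨n, m, by congr 1; exact Subtype.ext hn.symm⟩

lemma mk_pad (s a : R) (n N : ℕ) (h : n ≤ N) :
    LocalizedModule.mk (M := R) a ⟨s ^ n, (Submonoid.mem_powers_iff _ _).mpr ⟨n, rfl⟩⟩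
      = LocalizedModule.mk (s ^ (N - n) * a) ⟨s ^ N, (Submonoid.mem_powers_iff _ _).mpr ⟨N, rfl⟩⟩ := by
  obtain ⟨j, rfl⟩ := Nat.exists_eq_add_of_le h
  have key := LocalizedModule.mk_cancel_common_right (S := Submonoid.powers s)
    (⟨s ^ n, (Submonoid.mem_powers_iff _ _).mpr ⟨n, rfl⟩⟩) (⟨s ^ j, (Submonoid.mem_powers_iff _ _).mpr ⟨j, rfl⟩⟩) a
  -- key : mk (⟨s^j⟩ • a) (⟨s^n⟩ * ⟨s^j⟩) = mk a ⟨s^n⟩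
  rw [← key]
  have h1 : ((⟨s ^ n, (Submonoid.mem_powers_iff _ _).mpr ⟨n, rfl⟩⟩ : Submonoid.powers s) * ⟨s ^ j, (Submonoid.mem_powers_iff _ _).mpr ⟨j, rfl⟩⟩)
      = (⟨s ^ (n + j), (Submonoid.mem_powers_iff _ _).mpr ⟨n + j, rfl⟩⟩ : Submonoid.powers s) := Subtype.ext (pow_add s n j).symm
  rw [h1]
  congr 1
  · simp [Submonoid.smul_def, smul_eq_mul, Nat.add_sub_cancel_left]

lemma mk_add_same {S : Submonoid R} (s : S) (x y : R) :
    LocalizedModule.mk (M := R) x s + LocalizedModule.mk y s = LocalizedModule.mk (x + y) s := by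
  rw [LocalizedModule.mk_add_mk]
  have := LocalizedModule.mk_cancel_common_left (S := S) s s (x + y)
  rw [← this]
  congr 1
  simp [Submonoid.smul_def, smul_eq_mul, mul_add]

lemma locMapOfDvd_mk (a b cc : R) (hbc : b = a * cc) (h : a ∣ b) (m : R) (n : ℕ) :
    locMapOfDvd R R a b h (LocalizedModule.mk m ⟨a ^ n, (Submonoid.mem_powers_iff _ _).mpr ⟨n, rfl⟩⟩)
      = LocalizedModule.mk (cc ^ n * m) ⟨b ^ n, (Submonoid.mem_powers_iff _ _).mpr ⟨n, rfl⟩⟩ := by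
  have hu := isUnit_end_of_dvd R R a b h ⟨a ^ n, (Submonoid.mem_powers_iff _ _).mpr ⟨n, rfl⟩⟩
  rw [Module.End.isUnit_iff] at hu
  apply hu.1
  simp only [Module.algebraMap_end_apply]
  have lhs : (a ^ n) • locMapOfDvd R R a b h (LocalizedModule.mk m ⟨a ^ n, (Submonoid.mem_powers_iff _ _).mpr ⟨n, rfl⟩⟩)
      = LocalizedModule.mk m 1 := by
    rw [← map_smul, LocalizedModule.smul'_mk]
    have : LocalizedModule.mk (M := R) (a ^ n • m) ⟨a ^ n, (Submonoid.mem_powers_iff _ _).mpr ⟨n, rfl⟩⟩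
        = LocalizedModule.mk m 1 := by
      have := LocalizedModule.mk_cancel (S := Submonoid.powers a) (⟨a ^ n, (Submonoid.mem_powers_iff _ _).mpr ⟨n, rfl⟩⟩) m
      rw [← this]
      congr 1
    rw [this]
    show locMapOfDvd R R a b h (LocalizedModule.mkLinearMap (Submonoid.powers a) R m) = _
    rw [locMapOfDvd, IsLocalizedModule.lift_apply]
    rfl
  have rhs : (a ^ n) • LocalizedModule.mk (M := R) (cc ^ n * m) ⟨b ^ n, (Submonoid.mem_powers_iff _ _).mpr ⟨n, rfl⟩⟩
      = LocalizedModule.mk m 1 := by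
    rw [LocalizedModule.smul'_mk]
    have h2 : a ^ n • (cc ^ n * m) = (⟨b ^ n, (Submonoid.mem_powers_iff _ _).mpr ⟨n, rfl⟩⟩ : Submonoid.powers b) • m := by
      simp [Submonoid.smul_def, smul_eq_mul, hbc, mul_pow]
      ring
    rw [h2, LocalizedModule.mk_cancel]
  rw [lhs, rhs]

end LocHelp

noncomputable section Main
open MvPolynomial

theorem main (k : Type*) [Field k] [CharZero k] :
    Nontrivial ((LocalizedModule (Submonoid.powers (g1 k * g2 k * g3 k)) (Poly k)) ⧸
      LinearMap.range
        (((locMapOfDvd (Poly k) (Poly k) (g1 k * g2 k) (g1 k * g2 k * g3 k)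
              (dvd_mul_right _ _)).comp
            (LinearMap.fst (Poly k) (LocalizedModule (Submonoid.powers (g1 k * g2 k)) (Poly k))
              ((LocalizedModule (Submonoid.powers (g1 k * g3 k)) (Poly k)) ×
                (LocalizedModule (Submonoid.powers (g2 k * g3 k)) (Poly k))))) -
          ((locMapOfDvd (Poly k) (Poly k) (g1 k * g3 k) (g1 k * g2 k * g3 k)
              ⟨g2 k, by ring⟩).comp
            ((LinearMap.fst (Poly k)
              (LocalizedModule (Submonoid.powers (g1 k * g3 k)) (Poly k))
              (LocalizedModule (Submonoid.powers (g2 k * g3 k)) (Poly k))).comp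
              (LinearMap.snd (Poly k)
                (LocalizedModule (Submonoid.powers (g1 k * g2 k)) (Poly k)) _))) +
          ((locMapOfDvd (Poly k) (Poly k) (g2 k * g3 k) (g1 k * g2 k * g3 k)
              ⟨g1 k, by ring⟩).comp
            ((LinearMap.snd (Poly k)
              (LocalizedModule (Submonoid.powers (g1 k * g3 k)) (Poly k))
              (LocalizedModule (Submonoid.powers (g2 k * g3 k)) (Poly k))).comp
              (LinearMap.snd (Poly k)
                (LocalizedModule (Submonoid.powers (g1 k * g2 k)) (Poly k)) _))))) := by
  refine ⟨Submodule.Quotient.mk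
    (LocalizedModule.mk 1 ⟨g1 k * g2 k * g3 k, Submonoid.mem_powers _⟩), 0, fun hEq => ?_⟩
  have hmem := (Submodule.Quotient.mk_eq_zero _).mp hEq
  obtain ⟨⟨p, q, r⟩, hv⟩ := hmem
  obtain ⟨n1, pa, rfl⟩ := loc_rep (g1 k * g2 k) p
  obtain ⟨n2, qa, rfl⟩ := loc_rep (g1 k * g3 k) q
  obtain ⟨n3, ra, rfl⟩ := loc_rep (g2 k * g3 k) r
  rw [mk_pad (g1 k * g2 k) pa n1 (n1 + n2 + n3 + 1) (by omega),
      mk_pad (g1 k * g3 k) qa n2 (n1 + n2 + n3 + 1) (by omega),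
      mk_pad (g2 k * g3 k) ra n3 (n1 + n2 + n3 + 1) (by omega)] at hv
  simp only [LinearMap.sub_apply, LinearMap.add_apply, LinearMap.comp_apply,
    LinearMap.fst_apply, LinearMap.snd_apply] at hv
  rw [locMapOfDvd_mk (g1 k * g2 k) (g1 k * g2 k * g3 k) (g3 k) rfl _ _ (n1 + n2 + n3 + 1),
      locMapOfDvd_mk (g1 k * g3 k) (g1 k * g2 k * g3 k) (g2 k) (by ring) _ _ (n1 + n2 + n3 + 1),
      locMapOfDvd_mk (g2 k * g3 k) (g1 k * g2 k * g3 k) (g1 k) (by ring) _ _ (n1 + n2 + n3 + 1),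
      sub_eq_add_neg, ← LocalizedModule.mk_neg, mk_add_same, mk_add_same,
      LocalizedModule.mk_eq] at hv
  obtain ⟨u, hu⟩ := hv
  obtain ⟨j, hj⟩ := u.2
  simp only [Submonoid.smul_def, smul_eq_mul] at hu
  rw [← hj] at hu
  have hne : (g1 k * g2 k * g3 k) ≠ 0 :=
    mul_ne_zero (mul_ne_zero g1_ne g2_ne) g3_ne
  have hu2 := mul_left_cancel₀ (pow_ne_zero j hne) hu
  rw [mul_one] at hu2
  have hu3 : (g1 k * g2 k * g3 k)
        * (g3 k ^ (n1 + n2 + n3 + 1) * ((g1 k * g2 k) ^ (n1 + n2 + n3 + 1 - n1) * pa)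
          + -(g2 k ^ (n1 + n2 + n3 + 1) * ((g1 k * g3 k) ^ (n1 + n2 + n3 + 1 - n2) * qa))
          + g1 k ^ (n1 + n2 + n3 + 1) * ((g2 k * g3 k) ^ (n1 + n2 + n3 + 1 - n3) * ra))
      = (g1 k * g2 k * g3 k) * (g1 k * g2 k * g3 k) ^ (n1 + n2 + n3) := by
    rw [hu2]; ring
  have hu4 := mul_left_cancel₀ hne hu3
  exact not_rep (n1 + n2 + n3)
    ((g2 k * g3 k) ^ (n1 + n2 + n3 + 1 - n3) * ra)
    (-((g1 k * g3 k) ^ (n1 + n2 + n3 + 1 - n2) * qa))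
    ((g1 k * g2 k) ^ (n1 + n2 + n3 + 1 - n1) * pa)
    (by rw [← hu4]; ring)

end Main
end H3Aux

/-- for the ideal of 2×2 minors of a generic 2×3 matrix in
`R = k[x₁,…,x₆]`, `char k = 0`, the local cohomology module `H³_I(R)`, computed as the
cokernel of the last map of the Čech complex on the three minors, is nonzero. -/
theorem H3_minors_nonzero (k : Type*) [Field k] [CharZero k] :
    letI R := MvPolynomial (Fin 6) k
    letI X : Fin 6 → R := MvPolynomial.X
    letI f₁ : R := X 0 * X 4 - X 1 * X 3
    letI f₂ : R := X 0 * X 5 - X 2 * X 3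
    letI f₃ : R := X 1 * X 5 - X 2 * X 4
    Nontrivial ((LocalizedModule (Submonoid.powers (f₁ * f₂ * f₃)) R) ⧸
      LinearMap.range
        (((locMapOfDvd R R (f₁ * f₂) (f₁ * f₂ * f₃) (dvd_mul_right _ _)).comp
            (LinearMap.fst R (LocalizedModule (Submonoid.powers (f₁ * f₂)) R)
              ((LocalizedModule (Submonoid.powers (f₁ * f₃)) R) ×
                (LocalizedModule (Submonoid.powers (f₂ * f₃)) R)))) -
          ((locMapOfDvd R R (f₁ * f₃) (f₁ * f₂ * f₃) ⟨f₂, by ring⟩).comp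
            ((LinearMap.fst R (LocalizedModule (Submonoid.powers (f₁ * f₃)) R)
              (LocalizedModule (Submonoid.powers (f₂ * f₃)) R)).comp
              (LinearMap.snd R (LocalizedModule (Submonoid.powers (f₁ * f₂)) R) _))) +
          ((locMapOfDvd R R (f₂ * f₃) (f₁ * f₂ * f₃) ⟨f₁, by ring⟩).comp
            ((LinearMap.snd R (LocalizedModule (Submonoid.powers (f₁ * f₃)) R)
              (LocalizedModule (Submonoid.powers (f₂ * f₃)) R)).comp
              (LinearMap.snd R (LocalizedModule (Submonoid.powers (f₁ * f₂)) R) _))))) := by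
  exact H3Aux.main k

end CechPreamble
end
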